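/- Let G = T_n⟨t_1, …, t_k⟩ be a Toeplitz graph with k ≥ 3. If n > t_k + t_{k−1}, then G is not a line graph; that is, G is not isomorphic to the line graph of any simple graph. -/

import Mathlib

/-- The Toeplitz graph `T_n⟨t 1, …, t k⟩` on vertex set `Fin n`:
distinct vertices `x, y` are adjacent iff `|x − y| = t i` for some `1 ≤ i ≤ k`. -/
def toeplitzGraph (n k : ℕ) (t : ℕ → ℕ) : SimpleGraph (Fin n) where
  Adj x y := x ≠ y ∧ ∃ i, 1 ≤ i ∧ i ≤ k ∧ ((x : ℤ) - (y : ℤ)).natAbs = t i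
  symm := by
    constructor
    rintro x y ⟨hxy, i, h1, h2, h3⟩
    exact ⟨hxy.symm, i, h1, h2, by omega⟩
  loopless := by constructor; rintro x ⟨hx, -⟩; exact hx rfl

/-- A graph has a claw if it contains an induced `K_{1,3}`:
a center `a` adjacent to three pairwise distinct, pairwise nonadjacent leaves `b, c, d`. -/
def HasClaw {V : Type*} (G : SimpleGraph V) : Prop :=
  ∃ a b c d : V, G.Adj a b ∧ G.Adj a c ∧ G.Adj a d ∧
    b ≠ c ∧ b ≠ d ∧ c ≠ d ∧ ¬ G.Adj b c ∧ ¬ G.Adj b d ∧ ¬ G.Adj c d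

/-- A graph is claw-free if it has no claw. -/
def ClawFree {V : Type*} (G : SimpleGraph V) : Prop := ¬ HasClaw G

lemma toeplitz_adj_iff (n k : ℕ) (t : ℕ → ℕ) {a b : ℕ} (ha : a < n) (hb : b < n) :
    (toeplitzGraph n k t).Adj ⟨a, ha⟩ ⟨b, hb⟩ ↔
      (a ≠ b ∧ ∃ i, 1 ≤ i ∧ i ≤ k ∧ ((a:ℤ) - (b:ℤ)).natAbs = t i) := by
  simp [toeplitzGraph, Fin.ext_iff]

lemma pairing_lemma (t : ℕ → ℕ) (k L : ℕ) (hmono : StrictMonoOn t (Set.Icc 1 k))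
    (hL : 1 ≤ L) (hLk : L + 1 ≤ k)
    (h : ∀ m, 1 ≤ m → m ≤ L → ∃ i, 1 ≤ i ∧ i ≤ L ∧ t i + t m = t (L+1)) :
    ∀ m, 1 ≤ m → m ≤ L → t m + t (L+1-m) = t (L+1) := by
  have h' : ∀ m, ∃ i, 1 ≤ m → m ≤ L → (1 ≤ i ∧ i ≤ L ∧ t i + t m = t (L+1)) := by
    intro m
    by_cases hm : 1 ≤ m ∧ m ≤ L
    · obtain ⟨i, hi⟩ := h m hm.1 hm.2
      exact ⟨i, fun _ _ => hi⟩
    · exact ⟨1, fun h1 h2 => absurd ⟨h1, h2⟩ hm⟩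
  choose j hj using h'
  have tmono : ∀ i i', 1 ≤ i → i < i' → i' ≤ k → t i < t i' :=
    fun i i' h1 h2 h3 => hmono ⟨h1, by omega⟩ ⟨by omega, h3⟩ h2
  have trev : ∀ i i', 1 ≤ i → i' ≤ k → 1 ≤ i' → i ≤ k → t i < t i' → i < i' := by
    intro i i' h1 h2 h3 h4 h5
    by_contra hc
    push_neg at hc
    rcases eq_or_lt_of_le hc with rfl | hlt
    · omega
    · exact absurd (tmono i' i h3 hlt h4) (by omega)
  have tinj : ∀ i i', 1 ≤ i → i ≤ k → 1 ≤ i' → i' ≤ k → t i = t i' → i = i' := by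
    intro i i' h1 h2 h3 h4 h5
    by_contra hc
    rcases Nat.lt_or_ge i i' with hlt | hge
    · exact absurd (tmono i i' h1 hlt h4) (by omega)
    · rcases eq_or_lt_of_le hge with rfl | hlt
      · omega
      · exact absurd (tmono i' i h3 hlt h2) (by omega)
  have anti : ∀ m m', 1 ≤ m → m < m' → m' ≤ L → j m' < j m := by
    intro m m' h1 h2 h3
    obtain ⟨a1, a2, a3⟩ := hj m h1 (by omega)
    obtain ⟨b1, b2, b3⟩ := hj m' (by omega) h3
    have htm : t m < t m' := tmono m m' h1 h2 (by omega)
    have : t (j m') < t (j m) := by omega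
    exact trev _ _ b1 (by omega) a1 (by omega) this
  have bound : ∀ m, 1 ≤ m → m ≤ L → j m ≤ L + 1 - m := by
    intro m h1
    induction m, h1 using Nat.le_induction with
    | base => intro h2; have := (hj 1 le_rfl h2).2.1; omega
    | succ m hm ih =>
      intro h2
      have h3 := anti m (m+1) hm (by omega) h2
      have := ih (by omega)
      omega
  have low : ∀ d m, 1 ≤ m → m + d ≤ L → j (m + d) + d ≤ j m := by
    intro d
    induction d with
    | zero => simp
    | succ d ih =>
      intro m h1 h2
      have h3 := anti (m + d) (m + d + 1) (by omega) (by omega) (by omega)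
      have h4 := ih m h1 (by omega)
      have e : m + (d + 1) = m + d + 1 := rfl
      rw [e]
      omega
  intro m h1 h2
  obtain ⟨a1, a2, a3⟩ := hj m h1 h2
  have hb1 := bound m h1 h2
  have hlow := low (L - m) m h1 (by omega)
  rw [show m + (L - m) = L by omega] at hlow
  have hjL := (hj L hL le_rfl).1
  rw [show L + 1 - m = j m by omega]
  omega

lemma toeplitz_arith (n K : ℕ) (t : ℕ → ℕ) (hpos : 0 < t 1)
    (hmono : StrictMonoOn t (Set.Icc 1 (K+3))) (htn : t (K+3) < n)
    (hn : t (K+3) + t (K+2) < n)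
    (CF : ClawFree (toeplitzGraph n (K+3) t)) :
    ∀ i, 1 ≤ i → i ≤ K+3 → t i = i * t 1 := by
  have tmono : ∀ i i', 1 ≤ i → i < i' → i' ≤ (K + 3) → t i < t i' :=
    fun i i' h1 h2 h3 => hmono ⟨h1, by omega⟩ ⟨by omega, h3⟩ h2
  have tpos : ∀ i, 1 ≤ i → i ≤ K + 3 → 0 < t i := by
    intro i h1 h2
    rcases eq_or_lt_of_le h1 with rfl | hlt
    · exact hpos
    · have := tmono 1 i le_rfl hlt h2; omega
  have tle : ∀ i, 1 ≤ i → i ≤ (K + 3) → t i ≤ t (K + 3) := by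
    intro i h1 h2
    rcases eq_or_lt_of_le h2 with rfl | hlt
    · exact le_rfl
    · exact (tmono i (K + 3) h1 hlt le_rfl).le
  have trev : ∀ i i', 1 ≤ i → i' ≤ (K + 3) → 1 ≤ i' → i ≤ (K + 3) → t i < t i' → i < i' := by
    intro i i' h1 h2 h3 h4 h5
    by_contra hc
    push_neg at hc
    rcases eq_or_lt_of_le hc with rfl | hlt
    · omega
    · exact absurd (tmono i' i h3 hlt h4) (by omega)
  -- adjacency helpers
  have adjI : ∀ (a b : ℕ) (ha : a < n) (hb : b < n) (i : ℕ), 1 ≤ i → i ≤ (K + 3) →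
      b = a + t i → (toeplitzGraph n (K + 3) t).Adj ⟨a, ha⟩ ⟨b, hb⟩ := by
    intro a b ha hb i h1 h2 h3
    have := tpos i h1 h2
    exact (toeplitz_adj_iff n (K + 3) t ha hb).2 ⟨by omega, i, h1, h2, by omega⟩
  have adjE : ∀ (a b : ℕ) (ha : a < n) (hb : b < n),
      (toeplitzGraph n (K + 3) t).Adj ⟨a, ha⟩ ⟨b, hb⟩ →
      ∃ i, 1 ≤ i ∧ i ≤ (K + 3) ∧ (a = b + t i ∨ b = a + t i) := by
    intro a b ha hb h
    obtain ⟨hne, i, h1, h2, h3⟩ := (toeplitz_adj_iff n (K + 3) t ha hb).1 h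
    exact ⟨i, h1, h2, by omega⟩
  have notClaw : ∀ (a b c d : Fin n), (toeplitzGraph n (K + 3) t).Adj a b →
      (toeplitzGraph n (K + 3) t).Adj a c → (toeplitzGraph n (K + 3) t).Adj a d →
      b ≠ c → b ≠ d → c ≠ d →
      (toeplitzGraph n (K + 3) t).Adj b c ∨ (toeplitzGraph n (K + 3) t).Adj b d ∨
        (toeplitzGraph n (K + 3) t).Adj c d := by
    intro a b c d h1 h2 h3 h4 h5 h6
    by_contra hc
    push_neg at hc
    exact CF ⟨a, b, c, d, h1, h2, h3, h4, h5, h6, hc.1, hc.2.1, hc.2.2⟩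
  have hK2pos : 0 < t (K+2) := tpos (K+2) (by omega) (by omega)
  have hK2lt : t (K+2) < t (K+3) := tmono (K+2) (K+3) (by omega) (by omega) le_rfl
  have hn0 : 0 < n := by omega
  -- Claw family S': for m ∈ [1, K+2], t (K + 3) - t m ∈ T with index ≤ K+2
  have S' : ∀ m, 1 ≤ m → m ≤ K + 2 → ∃ i, 1 ≤ i ∧ i ≤ K + 2 ∧ t i + t m = t (K+3) := by
    intro m h1 h2
    have htm : t m < t (K+3) := tmono m (K+3) h1 (by omega) le_rfl
    have htmpos : 0 < t m := tpos m h1 (by omega)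
    have hA : t (K+3) < n := htn
    have hB : (0:ℕ) < n := hn0
    have hC : t (K+3) + t (K+2) < n := hn
    have hD : t (K+3) - t m < n := by omega
    have adjAB : (toeplitzGraph n (K + 3) t).Adj ⟨t (K+3), hA⟩ ⟨0, hB⟩ :=
      ((toeplitzGraph n (K + 3) t).adj_symm (adjI 0 (t (K+3)) hB hA (K+3) (by omega) le_rfl (by omega)))
    have adjAC : (toeplitzGraph n (K + 3) t).Adj ⟨t (K+3), hA⟩ ⟨t (K+3) + t (K+2), hC⟩ :=
      adjI _ _ hA hC (K+2) (by omega) (by omega) rfl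
    have adjAD : (toeplitzGraph n (K + 3) t).Adj ⟨t (K+3), hA⟩ ⟨t (K+3) - t m, hD⟩ :=
      (toeplitzGraph n (K + 3) t).adj_symm (adjI _ _ hD hA m h1 (by omega) (by omega))
    have hne1 : (⟨0, hB⟩ : Fin n) ≠ ⟨t (K+3) + t (K+2), hC⟩ := by
      simp [Fin.ext_iff]; omega
    have hne2 : (⟨0, hB⟩ : Fin n) ≠ ⟨t (K+3) - t m, hD⟩ := by
      simp [Fin.ext_iff]; omega
    have hne3 : (⟨t (K+3) + t (K+2), hC⟩ : Fin n) ≠ ⟨t (K+3) - t m, hD⟩ := by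
      simp [Fin.ext_iff]; omega
    rcases notClaw _ _ _ _ adjAB adjAC adjAD hne1 hne2 hne3 with h | h | h
    · obtain ⟨i, hi1, hi2, hi3⟩ := adjE _ _ _ _ h
      have := tle i hi1 hi2
      omega
    · obtain ⟨i, hi1, hi2, hi3⟩ := adjE _ _ _ _ h
      have hia : t i + t m = t (K+3) := by omega
      have : t i < t (K+3) := by omega
      have : i < K + 3 := trev i (K+3) hi1 le_rfl (by omega) hi2 this
      exact ⟨i, hi1, by omega, hia⟩
    · obtain ⟨i, hi1, hi2, hi3⟩ := adjE _ _ _ _ h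
      have hdiff : t i = t (K+2) + t m := by omega
      have : t (K+2) < t i := by omega
      have : K + 2 < i := trev (K+2) i (by omega) hi2 hi1 (by omega) this
      have : i = K + 3 := by omega
      subst this
      exact ⟨K+2, by omega, le_rfl, by omega⟩
  -- Claw family X: for m ∈ [1, K+1], t (K+2) - t m ∈ T with index ≤ K+1
  have X : ∀ m, 1 ≤ m → m ≤ K + 1 → ∃ i, 1 ≤ i ∧ i ≤ K + 1 ∧ t i + t m = t (K+2) := by
    intro m h1 h2
    have htm : t m < t (K+2) := tmono m (K+2) h1 (by omega) (by omega)
    have htmpos : 0 < t m := tpos m h1 (by omega)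
    have hA : t (K+3) < n := htn
    have hB : (0:ℕ) < n := hn0
    have hC : t (K+3) + t (K+2) < n := hn
    have hD : t (K+3) + t m < n := by omega
    have adjAB : (toeplitzGraph n (K + 3) t).Adj ⟨t (K+3), hA⟩ ⟨0, hB⟩ :=
      (toeplitzGraph n (K + 3) t).adj_symm (adjI 0 (t (K+3)) hB hA (K+3) (by omega) le_rfl (by omega))
    have adjAC : (toeplitzGraph n (K + 3) t).Adj ⟨t (K+3), hA⟩ ⟨t (K+3) + t (K+2), hC⟩ :=
      adjI _ _ hA hC (K+2) (by omega) (by omega) rfl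
    have adjAD : (toeplitzGraph n (K + 3) t).Adj ⟨t (K+3), hA⟩ ⟨t (K+3) + t m, hD⟩ :=
      adjI _ _ hA hD m h1 (by omega) rfl
    have hne1 : (⟨0, hB⟩ : Fin n) ≠ ⟨t (K+3) + t (K+2), hC⟩ := by
      simp [Fin.ext_iff]; omega
    have hne2 : (⟨0, hB⟩ : Fin n) ≠ ⟨t (K+3) + t m, hD⟩ := by
      simp [Fin.ext_iff]; omega
    have hne3 : (⟨t (K+3) + t (K+2), hC⟩ : Fin n) ≠ ⟨t (K+3) + t m, hD⟩ := by
      simp [Fin.ext_iff]; omega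
    rcases notClaw _ _ _ _ adjAB adjAC adjAD hne1 hne2 hne3 with h | h | h
    · obtain ⟨i, hi1, hi2, hi3⟩ := adjE _ _ _ _ h
      have := tle i hi1 hi2
      omega
    · obtain ⟨i, hi1, hi2, hi3⟩ := adjE _ _ _ _ h
      have := tle i hi1 hi2
      omega
    · obtain ⟨i, hi1, hi2, hi3⟩ := adjE _ _ _ _ h
      have hia : t i + t m = t (K+2) := by omega
      have : t i < t (K+2) := by omega
      have : i < K + 2 := trev i (K+2) hi1 (by omega) (by omega) hi2 this
      exact ⟨i, hi1, by omega, hia⟩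
  -- pairings
  have pair3 : ∀ m, 1 ≤ m → m ≤ K + 2 → t m + t (K + 3 - m) = t (K+3) := by
    have := pairing_lemma t (K+3) (K+2) hmono (by omega) (by omega)
      (by intro m h1 h2; exact S' m h1 h2)
    intro m h1 h2
    have h := this m h1 h2
    rwa [show K + 2 + 1 - m = K + 3 - m by omega, show K + 2 + 1 = K + 3 by omega] at h
  have pair2 : ∀ m, 1 ≤ m → m ≤ K + 1 → t m + t (K + 2 - m) = t (K+2) := by
    have := pairing_lemma t (K+3) (K+1) hmono (by omega) (by omega)
      (by intro m h1 h2; exact X m h1 h2)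
    intro m h1 h2
    have h := this m h1 h2
    rwa [show K + 1 + 1 - m = K + 2 - m by omega, show K + 1 + 1 = K + 2 by omega] at h
  -- consecutive gaps
  have hY : t 1 + t (K+2) = t (K+3) := by
    have h := pair3 1 le_rfl (by omega)
    rwa [show K + 3 - 1 = K + 2 by omega] at h
  have gap : ∀ j, 1 ≤ j → j ≤ K + 2 → t (j + 1) = t j + t 1 := by
    intro j h1 h2
    rcases eq_or_lt_of_le h2 with rfl | hlt
    · rw [show K + 2 + 1 = K + 3 by omega]; omega
    · have hm1 : 1 ≤ K + 2 - j := by omega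
      have hm2 : K + 2 - j ≤ K + 1 := by omega
      have e3 := pair3 (K + 2 - j) hm1 (by omega)
      have e2 := pair2 (K + 2 - j) hm1 hm2
      rw [show K + 3 - (K + 2 - j) = j + 1 by omega] at e3
      rw [show K + 2 - (K + 2 - j) = j by omega] at e2
      omega
  intro i h1 h2
  induction i, h1 using Nat.le_induction with
  | base => omega
  | succ i hi ih =>
    have := gap i hi (by omega)
    have := ih (by omega)
    have : t (i + 1) = i * t 1 + t 1 := by omega
    rw [this, Nat.succ_mul]

section Sym2Lemmas

lemma sym2_three {W : Type*} (z : Sym2 W) {x y w : W} (hx : x ∈ z) (hy : y ∈ z) (hw : w ∈ z) :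
    x = y ∨ x = w ∨ y = w := by
  induction z using Sym2.ind with
  | _ a b =>
    simp only [Sym2.mem_iff] at hx hy hw
    rcases hx with rfl | rfl <;> rcases hy with rfl | rfl <;> tauto

lemma sym2_triple {W : Type*} {e₁ e₂ e₃ : Sym2 W}
    (h12 : e₁ ≠ e₂) (h13 : e₁ ≠ e₃) (h23 : e₂ ≠ e₃)
    (m12 : ∃ v, v ∈ e₁ ∧ v ∈ e₂) (m13 : ∃ v, v ∈ e₁ ∧ v ∈ e₃) (m23 : ∃ v, v ∈ e₂ ∧ v ∈ e₃) :
    (∃ p, p ∈ e₁ ∧ p ∈ e₂ ∧ p ∈ e₃) ∨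
    ∃ a b c : W, a ≠ b ∧ a ≠ c ∧ b ≠ c ∧
      a ∈ e₁ ∧ b ∈ e₁ ∧ a ∈ e₂ ∧ c ∈ e₂ ∧ b ∈ e₃ ∧ c ∈ e₃ := by
  obtain ⟨a, ha1, ha2⟩ := m12
  by_cases ha3 : a ∈ e₃
  · exact Or.inl ⟨a, ha1, ha2, ha3⟩
  obtain ⟨b, hb1, hb3⟩ := m13
  obtain ⟨c, hc2, hc3⟩ := m23
  have hab : a ≠ b := fun h => ha3 (h ▸ hb3)
  have hac : a ≠ c := fun h => ha3 (h ▸ hc3)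
  by_cases hbc : b = c
  · exact Or.inl ⟨b, hb1, hbc ▸ hc2, hb3⟩
  · exact Or.inr ⟨a, b, c, hab, hac, hbc, ha1, hb1, ha2, hc2, hb3, hc3⟩

lemma sym2_no_triangle {W : Type*} {e₁ e₂ e₃ f : Sym2 W} {a b c : W}
    (hab : a ≠ b) (hac : a ≠ c) (hbc : b ≠ c)
    (ha1 : a ∈ e₁) (hb1 : b ∈ e₁) (ha2 : a ∈ e₂) (hc2 : c ∈ e₂) (hb3 : b ∈ e₃) (hc3 : c ∈ e₃)
    (hf1 : f ≠ e₁) (hf2 : f ≠ e₂) (hf3 : f ≠ e₃)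
    (m1 : ∃ v, v ∈ f ∧ v ∈ e₁) (m2 : ∃ v, v ∈ f ∧ v ∈ e₂) (m3 : ∃ v, v ∈ f ∧ v ∈ e₃) :
    False := by
  obtain ⟨x, hxf, hx1⟩ := m1
  rcases sym2_three e₁ hx1 ha1 hb1 with h | h | h
  · subst h
    obtain ⟨y, hyf, hy3⟩ := m3
    rcases sym2_three e₃ hy3 hb3 hc3 with h | h | h
    · subst h; exact hf1 (Sym2.eq_of_ne_mem hab hxf hyf ha1 hb1)
    · subst h; exact hf2 (Sym2.eq_of_ne_mem hac hxf hyf ha2 hc2)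
    · exact hbc h
  · subst h
    obtain ⟨y, hyf, hy2⟩ := m2
    rcases sym2_three e₂ hy2 ha2 hc2 with h | h | h
    · subst h; exact hf1 (Sym2.eq_of_ne_mem hab hyf hxf ha1 hb1)
    · subst h; exact hf3 (Sym2.eq_of_ne_mem hbc hxf hyf hb3 hc3)
    · exact hac h
  · exact hab h

lemma sym2_quad {W : Type*} {e₁ e₂ e₃ e₄ : Sym2 W}
    (h12 : e₁ ≠ e₂) (h13 : e₁ ≠ e₃) (h14 : e₁ ≠ e₄) (h23 : e₂ ≠ e₃) (h24 : e₂ ≠ e₄)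
    (h34 : e₃ ≠ e₄)
    (m12 : ∃ v, v ∈ e₁ ∧ v ∈ e₂) (m13 : ∃ v, v ∈ e₁ ∧ v ∈ e₃) (m14 : ∃ v, v ∈ e₁ ∧ v ∈ e₄)
    (m23 : ∃ v, v ∈ e₂ ∧ v ∈ e₃) (m24 : ∃ v, v ∈ e₂ ∧ v ∈ e₄) (m34 : ∃ v, v ∈ e₃ ∧ v ∈ e₄) :
    ∃ p, p ∈ e₁ ∧ p ∈ e₂ ∧ p ∈ e₃ ∧ p ∈ e₄ := by
  rcases sym2_triple h12 h13 h23 m12 m13 m23 with ⟨p, hp1, hp2, hp3⟩ | ⟨a, b, c, hab, hac, hbc, h⟩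
  · rcases sym2_triple h12 h14 h24 m12 m14 m24 with ⟨q, hq1, hq2, hq4⟩ | ⟨a, b, c, hab, hac, hbc, h⟩
    · by_cases hpq : p = q
      · exact ⟨p, hp1, hp2, hp3, hpq ▸ hq4⟩
      · exact absurd (Sym2.eq_of_ne_mem hpq hp1 hq1 hp2 hq2) h12
    · obtain ⟨ha1, hb1, ha2, hc2, hb4, hc4⟩ := h
      exact (sym2_no_triangle hab hac hbc ha1 hb1 ha2 hc2 hb4 hc4 h13.symm h23.symm h34
        (m13.imp fun v ⟨h1, h2⟩ => ⟨h2, h1⟩) (m23.imp fun v ⟨h1, h2⟩ => ⟨h2, h1⟩) m34).elim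
  · obtain ⟨ha1, hb1, ha2, hc2, hb3, hc3⟩ := h
    exact (sym2_no_triangle hab hac hbc ha1 hb1 ha2 hc2 hb3 hc3 h14.symm h24.symm h34.symm
      (m14.imp fun v ⟨h1, h2⟩ => ⟨h2, h1⟩) (m24.imp fun v ⟨h1, h2⟩ => ⟨h2, h1⟩)
      (m34.imp fun v ⟨h1, h2⟩ => ⟨h2, h1⟩)).elim

end Sym2Lemmas

open SimpleGraph in
lemma lineGraph_clawFree {W : Type*} (H : SimpleGraph W) : ClawFree H.lineGraph := by
  rintro ⟨a, b, c, d, hab, hac, had, hbc, hbd, hcd, nbc, nbd, ncd⟩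
  rw [lineGraph_adj_iff_exists] at hab hac had
  obtain ⟨-, x, hxa, hxb⟩ := hab
  obtain ⟨-, y, hya, hyc⟩ := hac
  obtain ⟨-, z, hza, hzd⟩ := had
  rcases sym2_three (a : Sym2 W) hxa hya hza with h | h | h
  · exact nbc (lineGraph_adj_iff_exists.2 ⟨hbc, x, hxb, h ▸ hyc⟩)
  · exact nbd (lineGraph_adj_iff_exists.2 ⟨hbd, x, hxb, h ▸ hzd⟩)
  · exact ncd (lineGraph_adj_iff_exists.2 ⟨hcd, y, hyc, h ▸ hzd⟩)

lemma clawFree_of_iso {V W : Type*} {G : SimpleGraph V} {G' : SimpleGraph W}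
    (φ : G ≃g G') (h : ClawFree G') : ClawFree G := by
  rintro ⟨a, b, c, d, hab, hac, had, hbc, hbd, hcd, nbc, nbd, ncd⟩
  exact h ⟨φ a, φ b, φ c, φ d, φ.map_adj_iff.2 hab, φ.map_adj_iff.2 hac, φ.map_adj_iff.2 had,
    fun h => hbc (φ.injective h), fun h => hbd (φ.injective h), fun h => hcd (φ.injective h),
    fun h => nbc (φ.map_adj_iff.1 h), fun h => nbd (φ.map_adj_iff.1 h),
    fun h => ncd (φ.map_adj_iff.1 h)⟩


open SimpleGraph in
/-- A Toeplitz graph `T_n⟨t 1, …, t k⟩` with `k ≥ 3` and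
`n > t k + t (k-1)` is not a line graph. -/
theorem stmt_18 (n k : ℕ) (t : ℕ → ℕ) (hk : 3 ≤ k)
    (hpos : 0 < t 1) (hmono : StrictMonoOn t (Set.Icc 1 k)) (htn : t k < n)
    (hn : t k + t (k - 1) < n) :
    ¬ ∃ (W : Type) (H : SimpleGraph W),
        Nonempty (toeplitzGraph n k t ≃g H.lineGraph) := by
  rintro ⟨W, H, ⟨φ⟩⟩
  obtain ⟨K, rfl⟩ : ∃ K, k = K + 3 := ⟨k - 3, by omega⟩
  rw [show K + 3 - 1 = K + 2 by omega] at hn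
  have CF : ClawFree (toeplitzGraph n (K+3) t) := clawFree_of_iso φ (lineGraph_clawFree H)
  have tarith := toeplitz_arith n K t hpos hmono htn hn CF
  have hd : 0 < t 1 := hpos
  have e3 : t (K+3) = (K+3) * t 1 := tarith (K+3) (by omega) le_rfl
  have e2 : t (K+2) = (K+2) * t 1 := tarith (K+2) (by omega) (by omega)
  have hv : ∀ j : ℕ, j ≤ K + 4 → j * t 1 < n := by
    intro j hj
    have h1 : j * t 1 ≤ (2*K+5) * t 1 := Nat.mul_le_mul_right _ (by omega)
    have h2 : (2*K+5) * t 1 = (K+3) * t 1 + (K+2) * t 1 := by ring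
    omega
  have adjv : ∀ (i j : ℕ) (hi : i ≤ K+4) (hj : j ≤ K+4), i < j → j ≤ i + (K+3) →
      (toeplitzGraph n (K+3) t).Adj ⟨i * t 1, hv i hi⟩ ⟨j * t 1, hv j hj⟩ := by
    intro i j hi hj hij hle
    have h1 : 1 ≤ j - i := by omega
    have h2 : j - i ≤ K + 3 := by omega
    have e : t (j - i) = (j - i) * t 1 := tarith _ h1 h2
    have emul : i * t 1 + (j - i) * t 1 = j * t 1 := by
      rw [← Nat.add_mul]
      congr 1
      omega
    have hpos2 : 0 < (j - i) * t 1 := Nat.mul_pos (by omega) hd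
    exact (toeplitz_adj_iff n (K+3) t (hv i hi) (hv j hj)).2 ⟨by omega, j - i, h1, h2, by omega⟩
  have Fne : ∀ (i j : ℕ) (hi : i ≤ K+4) (hj : j ≤ K+4), i ≠ j →
      (↑(φ ⟨i * t 1, hv i hi⟩) : Sym2 W) ≠ ↑(φ ⟨j * t 1, hv j hj⟩) := by
    intro i j hi hj hij h
    apply hij
    have h2 := φ.injective (Subtype.ext h)
    have h3 : i * t 1 = j * t 1 := congrArg Fin.val h2
    exact Nat.eq_of_mul_eq_mul_right hd h3
  have Fmem : ∀ (i j : ℕ) (hi : i ≤ K+4) (hj : j ≤ K+4),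
      (toeplitzGraph n (K+3) t).Adj ⟨i * t 1, hv i hi⟩ ⟨j * t 1, hv j hj⟩ →
      ∃ p, p ∈ (↑(φ ⟨i * t 1, hv i hi⟩) : Sym2 W) ∧ p ∈ (↑(φ ⟨j * t 1, hv j hj⟩) : Sym2 W) := by
    intro i j hi hj h
    exact (lineGraph_adj_iff_exists.1 (φ.map_adj_iff.2 h)).2
  have quad : ∀ (a : ℕ) (h : a + 3 ≤ K + 4), ∃ p : W,
      p ∈ (↑(φ ⟨a * t 1, hv a (by omega)⟩) : Sym2 W) ∧
      p ∈ (↑(φ ⟨(a+1) * t 1, hv (a+1) (by omega)⟩) : Sym2 W) ∧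
      p ∈ (↑(φ ⟨(a+2) * t 1, hv (a+2) (by omega)⟩) : Sym2 W) ∧
      p ∈ (↑(φ ⟨(a+3) * t 1, hv (a+3) (by omega)⟩) : Sym2 W) := by
    intro a h
    exact sym2_quad
      (Fne a (a+1) (by omega) (by omega) (by omega))
      (Fne a (a+2) (by omega) (by omega) (by omega))
      (Fne a (a+3) (by omega) (by omega) (by omega))
      (Fne (a+1) (a+2) (by omega) (by omega) (by omega))
      (Fne (a+1) (a+3) (by omega) (by omega) (by omega))
      (Fne (a+2) (a+3) (by omega) (by omega) (by omega))
      (Fmem a (a+1) (by omega) (by omega) (adjv a (a+1) (by omega) (by omega) (by omega) (by omega)))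
      (Fmem a (a+2) (by omega) (by omega) (adjv a (a+2) (by omega) (by omega) (by omega) (by omega)))
      (Fmem a (a+3) (by omega) (by omega) (adjv a (a+3) (by omega) (by omega) (by omega) (by omega)))
      (Fmem (a+1) (a+2) (by omega) (by omega) (adjv (a+1) (a+2) (by omega) (by omega) (by omega) (by omega)))
      (Fmem (a+1) (a+3) (by omega) (by omega) (adjv (a+1) (a+3) (by omega) (by omega) (by omega) (by omega)))
      (Fmem (a+2) (a+3) (by omega) (by omega) (adjv (a+2) (a+3) (by omega) (by omega) (by omega) (by omega)))
  obtain ⟨p, hp⟩ := quad 0 (by omega)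
  have chain : ∀ (a : ℕ) (h : a + 3 ≤ K + 4),
      p ∈ (↑(φ ⟨a * t 1, hv a (by omega)⟩) : Sym2 W) ∧
      p ∈ (↑(φ ⟨(a+1) * t 1, hv (a+1) (by omega)⟩) : Sym2 W) ∧
      p ∈ (↑(φ ⟨(a+2) * t 1, hv (a+2) (by omega)⟩) : Sym2 W) ∧
      p ∈ (↑(φ ⟨(a+3) * t 1, hv (a+3) (by omega)⟩) : Sym2 W) := by
    intro a
    induction a with
    | zero => intro h; exact hp
    | succ a ih =>
      intro h
      have prev := ih (by omega)
      obtain ⟨q, hq1, hq2, hq3, hq4⟩ := quad (a+1) h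
      by_cases hpq : p = q
      · subst hpq
        exact ⟨hq1, hq2, hq3, hq4⟩
      · exact absurd (Sym2.eq_of_ne_mem hpq prev.2.1 hq1 prev.2.2.1 hq2)
          (Fne (a+1) (a+2) (by omega) (by omega) (by omega))
  have hp0 : p ∈ (↑(φ ⟨0 * t 1, hv 0 (by omega)⟩) : Sym2 W) := (chain 0 (by omega)).1
  have hpK : p ∈ (↑(φ ⟨(K+4) * t 1, hv (K+4) (by omega)⟩) : Sym2 W) :=
    (chain (K+1) (by omega)).2.2.2
  have hvne : (⟨0 * t 1, hv 0 (by omega)⟩ : Fin n) ≠ ⟨(K+4) * t 1, hv (K+4) (by omega)⟩ := by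
    have h1 : 0 * t 1 = 0 := Nat.zero_mul _
    have h2 : 0 < (K+4) * t 1 := Nat.mul_pos (by omega) hd
    intro hEq
    have h3 : 0 * t 1 = (K+4) * t 1 := congrArg Fin.val hEq
    omega
  have hAdj : (toeplitzGraph n (K+3) t).Adj ⟨0 * t 1, hv 0 (by omega)⟩
      ⟨(K+4) * t 1, hv (K+4) (by omega)⟩ := by
    apply φ.map_adj_iff.1
    exact lineGraph_adj_iff_exists.2 ⟨fun h => hvne (φ.injective h), p, hp0, hpK⟩
  obtain ⟨hne, i, hi1, hi2, hi3⟩ := (toeplitz_adj_iff n (K+3) t _ _).1 hAdj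
  have ei : t i = i * t 1 := tarith i hi1 hi2
  have h0 : 0 * t 1 = 0 := Nat.zero_mul _
  have : i * t 1 = (K+4) * t 1 := by omega
  have := Nat.eq_of_mul_eq_mul_right hd this
  omega
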